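/- arXiv:1910.09040 — 2 statements merged into one kernel-verified Lean document; each statement's English description precedes it below -/
import Mathlib

section
/- Let n > 0, 0 < q < p, and set R = (p-q)/q. Define β_1(k), β_2(k) by β_1(0) = β_2(0) = 4/n² and [β_1(k+1); β_2(k+1)] = (n/2)[[0, p-q],[q, p-q]][β_1(k); β_2(k)]. Then β_1(k) = (4/n²) · [ ((1 - √(R/(R+4)))/2) λ_-^k + ((1 + √(R/(R+4)))/2) λ_+^k ], where λ_± = (nq/4)(R ± √(R(R+4))). -/
/-! Eliminating `β₂` from the first-order system gives the scalar recurrence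
`β₁ (k + 2) = τ β₁ (k + 1) - δ β₁ k`, where `τ = n (p - q) / 2` and `δ = -n² q (p - q) / 4` are the
trace and determinant of the matrix (Cayley–Hamilton). Its characteristic roots are `λ_±`, so
`β₁ k = A λ_-^k + B λ_+^k`, with `A`, `B` fixed by `β₁ 0` and `β₁ 1`; the identity
`√(R / (R + 4)) · √(R (R + 4)) = R` makes the given coefficients match `β₁ 1`. -/

theorem add_two_eq_of_first_order_system {S : Type*} [CommRing S] {x y : ℕ → S} {α γ δ : S}
    (hx : ∀ k, x (k + 1) = α * y k) (hy : ∀ k, y (k + 1) = γ * x k + δ * y k) (k : ℕ) :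
    x (k + 2) = δ * x (k + 1) + α * γ * x k := by
  rw [hx, hy, hx]
  ring

theorem eq_mul_pow_add_mul_pow_of_recurrence {S : Type*} [CommRing S] {u : ℕ → S}
    {l₁ l₂ A B : S} (h0 : u 0 = A + B) (h1 : u 1 = A * l₁ + B * l₂)
    (hrec : ∀ k, u (k + 2) = (l₁ + l₂) * u (k + 1) - l₁ * l₂ * u k) (k : ℕ) :
    u k = A * l₁ ^ k + B * l₂ ^ k := by
  suffices ∀ k, u k = A * l₁ ^ k + B * l₂ ^ k ∧ u (k + 1) = A * l₁ ^ (k + 1) + B * l₂ ^ (k + 1) from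
    (this k).1
  intro k
  induction k with
  | zero => exact ⟨by simpa using h0, by simpa using h1⟩
  | succ k ih =>
    refine ⟨ih.2, ?_⟩
    rw [hrec, ih.1, ih.2]
    ring

theorem Real.sqrt_div_mul_sqrt_mul {a b : ℝ} (ha : 0 ≤ a) (hb : 0 < b) :
    √(a / b) * √(a * b) = a := by
  rw [← Real.sqrt_mul (by positivity), show a / b * (a * b) = a * a by field_simp,
    Real.sqrt_mul_self ha]

theorem stmt_11_general (n p q : ℝ) (hq : 0 < q) (hqp : q < p)
    (R : ℝ) (hR : R = (p - q) / q)
    (β₁ β₂ : ℕ → ℝ) (h10 : β₁ 0 = 4 / n ^ 2) (h20 : β₂ 0 = 4 / n ^ 2)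
    (hrec : ∀ k : ℕ,
      β₁ (k + 1) = (n / 2) * ((p - q) * β₂ k) ∧
      β₂ (k + 1) = (n / 2) * (q * β₁ k + (p - q) * β₂ k)) :
    ∀ k : ℕ, β₁ k = (4 / n ^ 2) *
      ((1 - Real.sqrt (R / (R + 4))) / 2 * ((n * q / 4) * (R - Real.sqrt (R * (R + 4)))) ^ k
       + (1 + Real.sqrt (R / (R + 4))) / 2 * ((n * q / 4) * (R + Real.sqrt (R * (R + 4)))) ^ k) := by
  have hR0 : 0 ≤ R := hR ▸ div_nonneg (by linarith) hq.le
  have hpq : p - q = q * R := by rw [hR, mul_div_cancel₀ _ hq.ne']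
  set s := √(R * (R + 4))
  set t := √(R / (R + 4))
  have hs2 : s ^ 2 = R * (R + 4) := Real.sq_sqrt (by positivity)
  have hts : t * s = R := Real.sqrt_div_mul_sqrt_mul hR0 (by linarith)
  have hβ₁ := add_two_eq_of_first_order_system (x := β₁) (y := β₂)
    (α := n / 2 * (p - q)) (γ := n / 2 * q) (δ := n / 2 * (p - q))
    (fun k => (hrec k).1.trans (mul_assoc _ _ _).symm) (fun k => (hrec k).2.trans (by ring))
  intro k
  rw [mul_add, ← mul_assoc, ← mul_assoc]
  refine eq_mul_pow_add_mul_pow_of_recurrence ?_ ?_ (fun k => ?_) k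
  · rw [h10]; ring
  · rw [(hrec 0).1, h20, hpq]
    linear_combination (-(4 / n ^ 2) * (n * q / 4)) * hts
  · rw [hβ₁ k, hpq]
    linear_combination (-(n * q / 4) ^ 2 * β₁ k) * hs2

theorem stmt_11 (n p q : ℝ) (hn : 0 < n) (hq : 0 < q) (hqp : q < p)
    (R : ℝ) (hR : R = (p - q) / q)
    (β₁ β₂ : ℕ → ℝ) (h10 : β₁ 0 = 4 / n ^ 2) (h20 : β₂ 0 = 4 / n ^ 2)
    (hrec : ∀ k : ℕ,
      β₁ (k + 1) = (n / 2) * ((p - q) * β₂ k) ∧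
      β₂ (k + 1) = (n / 2) * (q * β₁ k + (p - q) * β₂ k)) :
    ∀ k : ℕ, β₁ k = (4 / n ^ 2) *
      ((1 - Real.sqrt (R / (R + 4))) / 2 * ((n * q / 4) * (R - Real.sqrt (R * (R + 4)))) ^ k
       + (1 + Real.sqrt (R / (R + 4))) / 2 * ((n * q / 4) * (R + Real.sqrt (R * (R + 4)))) ^ k) :=
  stmt_11_general n p q hq hqp R hR β₁ β₂ h10 h20 hrec
end

section
/- Let n > 0 and 0 < q < p. Define Y^{(k)} ∈ ℝ⁴ by Y^{(0)} = (4/n²)(1,0,0,0) and Y^{(k+1)} = T Y^{(k)} where T = [[np/2, 0, nq/2, 0], [nq/2, 0, nq/2, 0], [0, nq/2, 0, nq/2], [0, nq/2, 0, np/2]]. Define β_1(k) = Y_1 - Y_2 + Y_3 - Y_4, β_2(k) = Y_1 - Y_4, ζ_1(k) = Y_1 + Y_2 + Y_3 + Y_4, ζ_2(k) = Y_1 + Y_4 (all evaluated at Y^{(k)}). Then for all k ≥ 0: [β_1(k+1); β_2(k+1)] = (n/2)[[0, p-q],[q, p-q]][β_1(k); β_2(k)] and [ζ_1(k+1); ζ_2(k+1)]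 = (n/2)[[2q, p-q],[q, p-q]][ζ_1(k); ζ_2(k)]. -/
theorem stmt_13_general (n p q : ℝ)
    (Y : ℕ → Fin 4 → ℝ)
    (hrec : ∀ k : ℕ,
      Y (k + 1) 0 = (n * p / 2) * Y k 0 + (n * q / 2) * Y k 2 ∧
      Y (k + 1) 1 = (n * q / 2) * Y k 0 + (n * q / 2) * Y k 2 ∧
      Y (k + 1) 2 = (n * q / 2) * Y k 1 + (n * q / 2) * Y k 3 ∧
      Y (k + 1) 3 = (n * q / 2) * Y k 1 + (n * p / 2) * Y k 3) :
    ∀ k : ℕ,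
      (Y (k + 1) 0 - Y (k + 1) 1 + Y (k + 1) 2 - Y (k + 1) 3)
        = (n / 2) * ((p - q) * (Y k 0 - Y k 3)) ∧
      (Y (k + 1) 0 - Y (k + 1) 3)
        = (n / 2) * (q * (Y k 0 - Y k 1 + Y k 2 - Y k 3) + (p - q) * (Y k 0 - Y k 3)) ∧
      (Y (k + 1) 0 + Y (k + 1) 1 + Y (k + 1) 2 + Y (k + 1) 3)
        = (n / 2) * (2 * q * (Y k 0 + Y k 1 + Y k 2 + Y k 3) + (p - q) * (Y k 0 + Y k 3)) ∧
      (Y (k + 1) 0 + Y (k + 1) 3)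
        = (n / 2) * (q * (Y k 0 + Y k 1 + Y k 2 + Y k 3) + (p - q) * (Y k 0 + Y k 3)) := by
  intro k
  obtain ⟨h0, h1, h2, h3⟩ := hrec k
  exact ⟨by linear_combination h0 - h1 + h2 - h3, by linear_combination h0 - h3,
    by linear_combination h0 + h1 + h2 + h3, by linear_combination h0 + h3⟩

theorem stmt_13 (n p q : ℝ) (hn : 0 < n) (hq : 0 < q) (hqp : q < p)
    (Y : ℕ → Fin 4 → ℝ)
    (hY0 : Y 0 = ![4 / n ^ 2, 0, 0, 0])
    (hrec : ∀ k : ℕ,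
      Y (k + 1) 0 = (n * p / 2) * Y k 0 + (n * q / 2) * Y k 2 ∧
      Y (k + 1) 1 = (n * q / 2) * Y k 0 + (n * q / 2) * Y k 2 ∧
      Y (k + 1) 2 = (n * q / 2) * Y k 1 + (n * q / 2) * Y k 3 ∧
      Y (k + 1) 3 = (n * q / 2) * Y k 1 + (n * p / 2) * Y k 3) :
    ∀ k : ℕ,
      (Y (k + 1) 0 - Y (k + 1) 1 + Y (k + 1) 2 - Y (k + 1) 3)
        = (n / 2) * ((p - q) * (Y k 0 - Y k 3)) ∧
      (Y (k + 1) 0 - Y (k + 1) 3)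
        = (n / 2) * (q * (Y k 0 - Y k 1 + Y k 2 - Y k 3) + (p - q) * (Y k 0 - Y k 3)) ∧
      (Y (k + 1) 0 + Y (k + 1) 1 + Y (k + 1) 2 + Y (k + 1) 3)
        = (n / 2) * (2 * q * (Y k 0 + Y k 1 + Y k 2 + Y k 3) + (p - q) * (Y k 0 + Y k 3)) ∧
      (Y (k + 1) 0 + Y (k + 1) 3)
        = (n / 2) * (q * (Y k 0 + Y k 1 + Y k 2 + Y k 3) + (p - q) * (Y k 0 + Y k 3)) :=
  stmt_13_general n p q Y hrec
end
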